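/- If M covers N in the poset MacP(2,n) of rank-2 oriented matroids on n elements under weak maps, then exactly one of the following holds: (CR1) there is exactly one element i with |P_M(i)| ≥ 2 in M such that i is a loop in N and χ_N(j,k) = χ_M(j,k) for all j, k ≠ i; or (CR2) there are exactly two distinct parallel/anti-parallel classes P_M(i), P_M(j) of M such that χ_N(a,b) = 0 if a, b ∈ P_M(i) ∪ P_M(j) and χ_N(a,b) = χ_M(a,b) otherwise. -/
import Mathlib


/-- A rank-2 chirotope on `n` elements: a nonzero alternating sign function on pairs
satisfying the rank-2 Grassmann–Plücker relations.  A rank-2 oriented matroid is such a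
chirotope up to global sign. -/
structure Chirotope2 (n : ℕ) : Type where
  χ : Fin n → Fin n → SignType
  nonzero : ∃ i j, χ i j ≠ 0
  alt : ∀ i j, χ i j = - χ j i
  gp : ∀ x y0 y1 y2 : Fin n,
    (χ y0 x * χ y1 y2 = 0 ∧ χ y1 x * χ y0 y2 = 0 ∧ χ y2 x * χ y0 y1 = 0) ∨
    ((χ y0 x * χ y1 y2 = 1 ∨ -(χ y1 x * χ y0 y2) = 1 ∨ χ y2 x * χ y0 y1 = 1) ∧
     (χ y0 x * χ y1 y2 = -1 ∨ -(χ y1 x * χ y0 y2) = -1 ∨ χ y2 x * χ y0 y1 = -1))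

/-- The weak map order on rank-2 oriented matroids: `N ≤ M` iff, for a suitable global sign,
every basis of `N` is a basis of `M` with matching orientation. -/
def omLe {n : ℕ} (N M : Chirotope2 n) : Prop :=
  ∃ ε : SignType, (ε = 1 ∨ ε = -1) ∧ ∀ i j, N.χ i j = 0 ∨ N.χ i j = ε * M.χ i j

/-- Strict weak map order. -/
def omLt {n : ℕ} (N M : Chirotope2 n) : Prop := omLe N M ∧ ¬ omLe M N

/-- Two chirotopes determine the same oriented matroid. -/
def omEquiv {n : ℕ} (N M : Chirotope2 n) : Prop := omLe N M ∧ omLe M N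

/-- `M` covers `N` in the weak map order: `N < M` and nothing lies strictly between. -/
def OMCovers {n : ℕ} (N M : Chirotope2 n) : Prop :=
  omLt N M ∧ ∀ N' : Chirotope2 n, omLt N N' → ¬ omLt N' M

/-- `i` is a loop of `M`. -/
def IsLoop {n : ℕ} (M : Chirotope2 n) (i : Fin n) : Prop := ∀ k, M.χ i k = 0

/-- The parallel/anti-parallel class of `i` in `M`. -/
def ParClass {n : ℕ} (M : Chirotope2 n) (i : Fin n) : Set (Fin n) :=
  {j | (∀ k, M.χ j k = M.χ i k) ∨ (∀ k, M.χ j k = - M.χ i k)}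

/-- Covering relation CR1: there is exactly one element `i`, lying in a parallel/anti-parallel
class of `M` of size at least two, such that `i` is a loop of `N` and the chirotopes of `N`
and `M` agree (up to the global sign ambiguity of chirotopes) away from `i`. -/
def CR1 {n : ℕ} (N M : Chirotope2 n) : Prop :=
  ∃ ε : SignType, (ε = 1 ∨ ε = -1) ∧
    ∃! i : Fin n, ¬ IsLoop M i ∧ (∃ j, j ≠ i ∧ j ∈ ParClass M i) ∧ IsLoop N i ∧
      ∀ j k : Fin n, j ≠ i → k ≠ i → N.χ j k = ε * M.χ j k

/-- Covering relation CR2: there are two distinct parallel/anti-parallel classes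
`P_M(i)`, `P_M(j)` of `M` such that `χ_N` vanishes on pairs from `P_M(i) ∪ P_M(j)` and agrees
with `χ_M` (up to the global sign ambiguity of chirotopes) otherwise. -/
def CR2 {n : ℕ} (N M : Chirotope2 n) : Prop :=
  ∃ ε : SignType, (ε = 1 ∨ ε = -1) ∧
    ∃ i j : Fin n, ¬ IsLoop M i ∧ ¬ IsLoop M j ∧ ParClass M i ≠ ParClass M j ∧
      (∀ a b : Fin n, a ∈ ParClass M i ∪ ParClass M j →
        b ∈ ParClass M i ∪ ParClass M j → N.χ a b = 0) ∧
      (∀ a b : Fin n,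
        ¬ (a ∈ ParClass M i ∪ ParClass M j ∧ b ∈ ParClass M i ∪ ParClass M j) →
        N.χ a b = ε * M.χ a b)

namespace OMAux

/-! ### sign arithmetic lemmas -/

theorem sgn_ac6 : ∀ p q r s A B : SignType, (p*q*A)*(r*s*B) = (q*p*r*s)*(A*B) := by decide

theorem sgn_gp_scale : ∀ ρ t1 t2 t3 : SignType,
    ((t1 = 0 ∧ t2 = 0 ∧ t3 = 0) ∨
     ((t1 = 1 ∨ -t2 = 1 ∨ t3 = 1) ∧ (t1 = -1 ∨ -t2 = -1 ∨ t3 = -1))) →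
    ((ρ*t1 = 0 ∧ ρ*t2 = 0 ∧ ρ*t3 = 0) ∨
     ((ρ*t1 = 1 ∨ -(ρ*t2) = 1 ∨ ρ*t3 = 1) ∧ (ρ*t1 = -1 ∨ -(ρ*t2) = -1 ∨ ρ*t3 = -1))) := by
  decide

theorem sgn_trans : ∀ su sv sw a b c : SignType,
    su * sv * a = 1 → sv * sw * b = 1 →
    ((-su*b = 0 ∧ -sv*c = 0 ∧ -sw*a = 0) ∨
     ((-su*b = 1 ∨ -(-sv*c) = 1 ∨ -sw*a = 1) ∧
      (-su*b = -1 ∨ -(-sv*c) = -1 ∨ -sw*a = -1))) →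
    su * sw * c = 1 := by decide

theorem sgn_eq : ∀ t1 t2 : SignType,
    ((t1 = 0 ∧ t2 = 0 ∧ (0:SignType) = 0) ∨
     ((t1 = 1 ∨ -t2 = 1 ∨ (0:SignType) = 1) ∧ (t1 = -1 ∨ -t2 = -1 ∨ (0:SignType) = -1))) →
    t1 = t2 := by decide

theorem sgn_cancel : ∀ p q x y : SignType, p ≠ 0 → p * x = q * y → x = (p*q)*y := by decide

theorem sgn_notone : ∀ s t u : SignType, s ≠ 0 → t ≠ 0 → u ≠ 0 → ¬ s*t*u = 1 → s*t*u = -1 := by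
  decide

theorem sgn_neg_of : ∀ s t a : SignType, s*t*a = -1 → -a = s*t := by decide

theorem sgn_calc1 : ∀ p q r : SignType, p ≠ 0 → (p*q)*(r*p) = r*q := by decide

theorem sgn_calc2 : ∀ e h0 h1 r t : SignType, e ≠ 0 → h0 ≠ 0 → r ≠ 0 →
    (-(e*h0*r) * -(e*h1*r)) * (e*h0*t) = e*h1*t := by decide

theorem sgn_tau : ∀ p η : SignType, p ≠ 0 → p * (η * p) = η := by decide

theorem sgn_ac4 : ∀ p a b c : SignType, p*a*b*c = p*b*a*c := by decide

theorem sgn_ac4' : ∀ p a b c : SignType, p*c*a*b = p*a*b*c := by decide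

theorem sgn_mulneg : ∀ p q z : SignType, p * q * -z = -(q * p * z) := by decide

theorem sgn_eps_cancel : ∀ e x : SignType, (e = 1 ∨ e = -1) → e * (e * x) = x := by decide

theorem sgn_eps_ne : ∀ e : SignType, (e = 1 ∨ e = -1) → e ≠ 0 := by decide

theorem sgn_zero_of_eq : ∀ e x : SignType, e ≠ 0 → (0 : SignType) = e * x → x = 0 := by decide

theorem sgn_flip : ∀ s x y : SignType, s * x = y → s * -x = -y := by decide

/-! ### basic chirotope lemmas -/

variable {n : ℕ}

theorem chi_self (M : Chirotope2 n) (a : Fin n) : M.χ a a = 0 := by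
  have h := M.alt a a
  cases hv : M.χ a a <;> rw [hv] at h <;> first | rfl | exact absurd h (by decide)

theorem chi_zero_right (M : Chirotope2 n) {a b : Fin n} (h : IsLoop M b) : M.χ a b = 0 := by
  rw [M.alt a b, h a]; rfl

/-- parallel elements have proportional rows -/
theorem parclass_sign (M : Chirotope2 n) {a b : Fin n} (h : b ∈ ParClass M a) :
    ∃ η : SignType, (η = 1 ∨ η = -1) ∧ ∀ k, M.χ b k = η * M.χ a k := by
  rcases h with h | h
  · exact ⟨1, Or.inl rfl, fun k => by rw [one_mul]; exact h k⟩
  · exact ⟨-1, Or.inr rfl, fun k => by rw [neg_one_mul]; exact h k⟩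

theorem parclass_refl (M : Chirotope2 n) (a : Fin n) : a ∈ ParClass M a :=
  Or.inl fun _ => rfl

theorem parclass_symm (M : Chirotope2 n) {a b : Fin n} (h : b ∈ ParClass M a) :
    a ∈ ParClass M b := by
  rcases h with h | h
  · exact Or.inl fun k => (h k).symm
  · exact Or.inr fun k => by rw [h k, neg_neg]

theorem parclass_eq (M : Chirotope2 n) {a b : Fin n} (h : b ∈ ParClass M a) :
    ParClass M b = ParClass M a := by
  ext x
  constructor
  · intro hx
    rcases hx with hx | hx <;> rcases h with h | h
    · exact Or.inl fun k => (hx k).trans (h k)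
    · exact Or.inr fun k => (hx k).trans (h k)
    · exact Or.inr fun k => by rw [hx k, h k]
    · exact Or.inl fun k => by rw [hx k, h k, neg_neg]
  · intro hx
    rcases hx with hx | hx <;> rcases h with h | h
    · exact Or.inl fun k => (hx k).trans (h k).symm
    · exact Or.inr fun k => by rw [hx k, h k, neg_neg]
    · exact Or.inr fun k => by rw [hx k, h k]
    · exact Or.inl fun k => by rw [hx k, h k]

/-- members of the class of a non-loop are non-loops -/
theorem parclass_nonloop (M : Chirotope2 n) {a b : Fin n} (ha : ¬ IsLoop M a)
    (h : b ∈ ParClass M a) : ¬ IsLoop M b := by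
  intro hb
  apply ha
  obtain ⟨η, hη, hrow⟩ := parclass_sign M h
  intro k
  have := hrow k
  rw [hb k] at this
  exact (sgn_zero_of_eq η _ (sgn_eps_ne η hη) this)

/-- parallel elements have vanishing chirotope -/
theorem chi_zero_of_par (M : Chirotope2 n) {a b : Fin n} (h : b ∈ ParClass M a) :
    M.χ a b = 0 := by
  obtain ⟨η, hη, hrow⟩ := parclass_sign M h
  have h1 : M.χ b a = η * M.χ a a := hrow a
  rw [chi_self] at h1
  rw [M.alt a b, h1, mul_zero]; rfl

/-- key lemma: non-loops with vanishing chirotope are parallel -/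
theorem par_of_chi_zero (M : Chirotope2 n) {a b : Fin n} (hab : M.χ a b = 0)
    (ha : ¬ IsLoop M a) (hb : ¬ IsLoop M b) : b ∈ ParClass M a := by
  obtain ⟨k, hk⟩ : ∃ k, M.χ a k ≠ 0 := by
    by_contra hc; push_neg at hc; exact ha hc
  have key : ∀ m, M.χ b m = (M.χ a k * M.χ b k) * M.χ a m := by
    intro m
    have hgp := M.gp k a b m
    rw [hab, mul_zero] at hgp
    have h12 : M.χ a k * M.χ b m = M.χ b k * M.χ a m := sgn_eq _ _ hgp
    exact sgn_cancel (M.χ a k) (M.χ b k) _ _ hk h12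
  cases hc : M.χ a k * M.χ b k with
  | zero =>
    exfalso; apply hb; intro m
    rw [key m, hc]
    exact zero_mul _
  | pos =>
    exact Or.inl fun m => by rw [key m, hc]; exact one_mul _
  | neg =>
    exact Or.inr fun m => by rw [key m, hc]; exact neg_one_mul _

theorem chi_ne_of_not_par (M : Chirotope2 n) {a b : Fin n} (ha : ¬ IsLoop M a)
    (hb : ¬ IsLoop M b) (h : b ∉ ParClass M a) : M.χ a b ≠ 0 :=
  fun h0 => h (par_of_chi_zero M h0 ha hb)

/-- chain rule transitivity via GP -/
theorem trans_of_gp (M : Chirotope2 n) (e u v w : Fin n)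
    (h1 : M.χ e u * M.χ e v * M.χ u v = 1) (h2 : M.χ e v * M.χ e w * M.χ v w = 1) :
    M.χ e u * M.χ e w * M.χ u w = 1 := by
  have hgp := M.gp e u v w
  rw [M.alt u e, M.alt v e, M.alt w e] at hgp
  exact sgn_trans _ _ _ _ _ _ h1 h2 hgp

/-- existence of minimal elements for transitive irreflexive relations on finsets -/
theorem finset_exists_min {α : Type*} (r : α → α → Prop) (S : Finset α) (hne : S.Nonempty)
    (htr : ∀ a ∈ S, ∀ b ∈ S, ∀ c ∈ S, r a b → r b c → r a c)
    (hirr : ∀ a ∈ S, ¬ r a a) :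
    ∃ m ∈ S, ∀ x ∈ S, ¬ r x m := by
  classical
  obtain ⟨m, hm, hmin⟩ := S.exists_min_image (fun x => (S.filter (fun z => r z x)).card) hne
  refine ⟨m, hm, fun x hx hxm => ?_⟩
  have hsub : S.filter (fun z => r z x) ⊂ S.filter (fun z => r z m) := by
    constructor
    · intro z hz
      rw [Finset.mem_filter] at hz ⊢
      exact ⟨hz.1, htr z hz.1 x hx m hm hz.2 hxm⟩
    · intro hc
      have hxmem : x ∈ S.filter (fun z => r z m) := Finset.mem_filter.2 ⟨hx, hxm⟩
      have := hc hxmem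
      rw [Finset.mem_filter] at this
      exact hirr x hx this.2
  exact absurd (hmin x hx) (not_le.2 (Finset.card_lt_card hsub))

/-! ### reindexing/reorienting construction -/

def reSign {n : ℕ} (M : Chirotope2 n) (f : Fin n → Fin n) (σ : Fin n → SignType)
    (hnz : ∃ a b, σ a * σ b * M.χ (f a) (f b) ≠ 0) : Chirotope2 n where
  χ a b := σ a * σ b * M.χ (f a) (f b)
  nonzero := hnz
  alt a b := by
    show σ a * σ b * M.χ (f a) (f b) = -(σ b * σ a * M.χ (f b) (f a))
    rw [M.alt (f a) (f b)]
    exact sgn_mulneg _ _ _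
  gp x y0 y1 y2 := by
    have hgp := M.gp (f x) (f y0) (f y1) (f y2)
    have e1 : σ y0 * σ x * M.χ (f y0) (f x) * (σ y1 * σ y2 * M.χ (f y1) (f y2)) =
        (σ x * σ y0 * σ y1 * σ y2) * (M.χ (f y0) (f x) * M.χ (f y1) (f y2)) :=
      sgn_ac6 _ _ _ _ _ _
    have e2 : σ y1 * σ x * M.χ (f y1) (f x) * (σ y0 * σ y2 * M.χ (f y0) (f y2)) =
        (σ x * σ y0 * σ y1 * σ y2) * (M.χ (f y1) (f x) * M.χ (f y0) (f y2)) := by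
      rw [sgn_ac6, sgn_ac4 (σ x) (σ y1) (σ y0) (σ y2)]
    have e3 : σ y2 * σ x * M.χ (f y2) (f x) * (σ y0 * σ y1 * M.χ (f y0) (f y1)) =
        (σ x * σ y0 * σ y1 * σ y2) * (M.χ (f y2) (f x) * M.χ (f y0) (f y1)) := by
      rw [sgn_ac6, sgn_ac4' (σ x) (σ y0) (σ y1) (σ y2)]
    show _ ∨ _
    rw [e1, e2, e3]
    exact sgn_gp_scale _ _ _ _ hgp

theorem reSign_χ {n : ℕ} (M : Chirotope2 n) (f : Fin n → Fin n) (σ : Fin n → SignType)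
    (hnz) (a b : Fin n) : (reSign M f σ hnz).χ a b = σ a * σ b * M.χ (f a) (f b) := rfl

end OMAux

namespace OMAux

open Classical in
noncomputable def copyFun {n : ℕ} (i c : Fin n) : Fin n → Fin n :=
  fun x => if x = i then c else x

open Classical in
noncomputable def copySgn {n : ℕ} (i : Fin n) (s : SignType) : Fin n → SignType :=
  fun x => if x = i then s else 1

theorem copyFun_self {n : ℕ} (i c : Fin n) : copyFun i c i = c := by
  simp [copyFun]

theorem copyFun_other {n : ℕ} (i c : Fin n) {x : Fin n} (h : x ≠ i) : copyFun i c x = x := by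
  simp [copyFun, h]

theorem copySgn_self {n : ℕ} (i : Fin n) (s : SignType) : copySgn i s i = s := by
  simp [copySgn]

theorem copySgn_other {n : ℕ} (i : Fin n) (s : SignType) {x : Fin n} (h : x ≠ i) :
    copySgn i s x = 1 := by
  simp [copySgn, h]

variable {n : ℕ}

open Classical in
noncomputable def mergeFun (M : Chirotope2 n) (c₁ c₀ : Fin n) : Fin n → Fin n :=
  fun x => if x ∈ ParClass M c₁ then c₀ else x

open Classical in
noncomputable def mergeSgn (M : Chirotope2 n) (c₁ e : Fin n) (s : SignType) :
    Fin n → SignType :=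
  fun x => if x ∈ ParClass M c₁ then (M.χ c₁ e * M.χ x e) * s else 1

theorem mergeFun_mem {M : Chirotope2 n} {c₁ c₀ x : Fin n} (h : x ∈ ParClass M c₁) :
    mergeFun M c₁ c₀ x = c₀ := by
  simp only [mergeFun]; rw [if_pos h]

theorem mergeFun_notmem {M : Chirotope2 n} {c₁ c₀ x : Fin n} (h : x ∉ ParClass M c₁) :
    mergeFun M c₁ c₀ x = x := by
  simp only [mergeFun]; rw [if_neg h]

theorem mergeSgn_mem {M : Chirotope2 n} {c₁ e x : Fin n} {s : SignType}
    (h : x ∈ ParClass M c₁) : mergeSgn M c₁ e s x = (M.χ c₁ e * M.χ x e) * s := by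
  simp only [mergeSgn]; rw [if_pos h]

theorem mergeSgn_notmem {M : Chirotope2 n} {c₁ e x : Fin n} {s : SignType}
    (h : x ∉ ParClass M c₁) : mergeSgn M c₁ e s x = 1 := by
  simp only [mergeSgn]; rw [if_neg h]

theorem sgn_factor : ∀ u v : SignType, u ≠ 0 → u * v = 0 → v = 0 := by decide

theorem sgn_case_pq : ∀ τ s x y : SignType, s * x = y → (τ*s)*x = τ*y := by decide

theorem sgn_case_qp : ∀ τ s x y : SignType, s * x = y → (τ*s)*(-x) = -(τ*y) := by decide

theorem sgn_calc2' : ∀ e h0 h1 r t : SignType, e ≠ 0 → h0 ≠ 0 → r ≠ 0 →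
    (-(e*(h0*r)) * -(e*(h1*r))) * (e*(h0*t)) = e*(h1*t) := by decide

/-- CR1 and CR2 are mutually exclusive. -/
theorem not_CR1_and_CR2 (N M : Chirotope2 n) : ¬ (CR1 N M ∧ CR2 N M) := by
  rintro ⟨⟨ε1, hε1, i, ⟨hiM, ⟨j, hji, hjP⟩, hiN, hagr⟩, -⟩,
          ⟨ε2, hε2, p, q, hpM, hqM, hPQ, hzero, -⟩⟩
  have hx : ∃ x, x ∈ ParClass M p ∧ x ≠ i := by
    by_cases hip : i ∈ ParClass M p
    · refine ⟨j, ?_, hji⟩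
      have h1 : ParClass M i = ParClass M p := parclass_eq M hip
      rw [← h1]; exact hjP
    · exact ⟨p, parclass_refl M p, fun h => hip (h ▸ parclass_refl M p)⟩
  have hy : ∃ y, y ∈ ParClass M q ∧ y ≠ i := by
    by_cases hiq : i ∈ ParClass M q
    · refine ⟨j, ?_, hji⟩
      have h1 : ParClass M i = ParClass M q := parclass_eq M hiq
      rw [← h1]; exact hjP
    · exact ⟨q, parclass_refl M q, fun h => hiq (h ▸ parclass_refl M q)⟩
  obtain ⟨x, hxP, hxi⟩ := hx
  obtain ⟨y, hyP, hyi⟩ := hy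
  have hxnl : ¬ IsLoop M x := parclass_nonloop M hpM hxP
  have hynl : ¬ IsLoop M y := parclass_nonloop M hqM hyP
  have hyx : y ∉ ParClass M x := by
    intro hmem
    apply hPQ
    rw [← parclass_eq M hxP, ← parclass_eq M hyP]
    exact (parclass_eq M hmem).symm
  have hne : M.χ x y ≠ 0 := chi_ne_of_not_par M hxnl hynl hyx
  have h0 : N.χ x y = 0 := hzero x y (Or.inl hxP) (Or.inr hyP)
  have h1 : N.χ x y = ε1 * M.χ x y := hagr x y hxi hyi
  rw [h0] at h1
  exact hne (sgn_zero_of_eq ε1 _ (sgn_eps_ne ε1 hε1) h1)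

end OMAux


open OMAux

/-- If `M` covers `N` in `MacP(2,n)`, then exactly one of CR1 and CR2 holds. -/
theorem covers_iff_CR1_xor_CR2 {n : ℕ} (N M : Chirotope2 n) (h : OMCovers N M) :
    Xor' (CR1 N M) (CR2 N M) := by
  classical
  obtain ⟨⟨hle, hnle⟩, hcov⟩ := h
  obtain ⟨ε, hε, hNM⟩ := hle
  have hε0 : ε ≠ 0 := sgn_eps_ne ε hε
  have hNM' : ∀ a b, M.χ a b = 0 → N.χ a b = 0 := by
    intro a b h0
    rcases hNM a b with h | h
    · exact h
    · rw [h, h0, mul_zero]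
  have hmain : CR1 N M ∨ CR2 N M := by
    by_cases hcase : ∃ i, ¬ IsLoop M i ∧ IsLoop N i
    · -- ===================== CASE 1 : CR1 =====================
      obtain ⟨i, hiM, hiN⟩ := hcase
      have hNi : ∀ a b : Fin n, a = i ∨ b = i → N.χ a b = 0 := by
        intro a b hab
        rcases hab with rfl | rfl
        · exact hiN b
        · exact chi_zero_right N hiN
      have hnzoff : ∃ a b : Fin n, a ≠ i ∧ b ≠ i ∧ M.χ a b ≠ 0 := by
        by_contra hc; push_neg at hc
        obtain ⟨x, y, hxy⟩ := N.nonzero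
        by_cases hx : x = i
        · exact hxy (hNi x y (Or.inl hx))
        by_cases hy : y = i
        · exact hxy (hNi x y (Or.inr hy))
        exact hxy (hNM' x y (hc x y hx hy))
      -- N' : delete i from M
      have hnzN' : ∃ a b, copySgn i 0 a * copySgn i 0 b * M.χ (id a) (id b) ≠ 0 := by
        obtain ⟨a, b, ha, hb, hM⟩ := hnzoff
        refine ⟨a, b, ?_⟩
        rw [copySgn_other i 0 ha, copySgn_other i 0 hb, one_mul, one_mul]
        exact hM
      set N' := reSign M id (copySgn i 0) hnzN' with hN'def
      have hN'v : ∀ a b, N'.χ a b = copySgn i 0 a * copySgn i 0 b * M.χ a b := by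
        intro a b; rw [hN'def]; rfl
      have hN'off : ∀ a b : Fin n, a ≠ i → b ≠ i → N'.χ a b = M.χ a b := by
        intro a b ha hb
        rw [hN'v, copySgn_other i 0 ha, copySgn_other i 0 hb, one_mul, one_mul]
      have hN'i : ∀ a b : Fin n, a = i ∨ b = i → N'.χ a b = 0 := by
        intro a b hab
        rw [hN'v]
        rcases hab with rfl | rfl
        · rw [copySgn_self, zero_mul, zero_mul]
        · rw [copySgn_self, mul_zero, zero_mul]
      have hleNN' : omLe N N' := by
        refine ⟨ε, hε, fun a b => ?_⟩
        by_cases hab : a = i ∨ b = i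
        · exact Or.inl (hNi a b hab)
        · push_neg at hab
          rcases hNM a b with h | h
          · exact Or.inl h
          · exact Or.inr (by rw [h, hN'off a b hab.1 hab.2])
      have hkM : ∃ k, M.χ i k ≠ 0 := by
        by_contra hc; push_neg at hc; exact hiM hc
      have hltN'M : omLt N' M := by
        refine ⟨⟨1, Or.inl rfl, fun a b => ?_⟩, ?_⟩
        · by_cases hab : a = i ∨ b = i
          · exact Or.inl (hN'i a b hab)
          · push_neg at hab
            exact Or.inr (by rw [one_mul, hN'off a b hab.1 hab.2])
        · rintro ⟨δ, hδ, hMN'⟩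
          obtain ⟨k, hk⟩ := hkM
          rcases hMN' i k with h | h
          · exact hk h
          · rw [hN'i i k (Or.inl rfl), mul_zero] at h; exact hk h
      have hN'N : omLe N' N := by
        by_contra hc
        exact hcov N' ⟨hleNN', hc⟩ hltN'M
      have hagree : ∀ a b : Fin n, a ≠ i → b ≠ i → N.χ a b = ε * M.χ a b := by
        intro a b ha hb
        by_cases hM0 : M.χ a b = 0
        · rw [hM0, mul_zero]; exact hNM' a b hM0
        obtain ⟨δ, hδ, hd⟩ := hN'N
        rcases hNM a b with h2 | h2
        · rcases hd a b with h | h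
          · rw [hN'off a b ha hb] at h; exact absurd h hM0
          · rw [hN'off a b ha hb, h2, mul_zero] at h; exact absurd h hM0
        · exact h2
      have hpar : ∃ j, j ≠ i ∧ j ∈ ParClass M i := by
        by_contra hnopar; push_neg at hnopar
        by_cases hcd : ∃ c d : Fin n,
            ¬IsLoop M c ∧ ¬IsLoop M d ∧ c ≠ i ∧ d ≠ i ∧ c ∉ ParClass M d
        · -- build N'' : move i on top of a minimal class, contradiction with cover
          obtain ⟨c, d, hcl, hdl, hci, hdi, hcd'⟩ := hcd
          have hiSchi : ∀ b : Fin n, ¬IsLoop M b → b ≠ i → M.χ i b ≠ 0 := by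
            intro b hbl hbi
            exact chi_ne_of_not_par M hiM hbl (hnopar b hbi)
          obtain ⟨c₀, hc₀S, hc₀min⟩ := finset_exists_min
            (fun x y => M.χ i x * M.χ i y * M.χ x y = 1)
            (Finset.univ.filter (fun b => ¬IsLoop M b ∧ b ≠ i))
            ⟨c, by simp [hcl, hci]⟩
            (fun x _ y _ z _ h1 h2 => trans_of_gp M i x y z h1 h2)
            (fun x _ h1 => by
              have h1' : M.χ i x * M.χ i x * M.χ x x = 1 := h1
              rw [chi_self M x, mul_zero] at h1'
              exact absurd h1' (by decide))
          rw [Finset.mem_filter] at hc₀S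
          obtain ⟨-, hc₀l, hc₀i⟩ := hc₀S
          have hic₀ : M.χ i c₀ ≠ 0 := hiSchi c₀ hc₀l hc₀i
          have KEY1 : ∀ b : Fin n, b ≠ i →
              (M.χ c₀ b = 0 ∨ M.χ i c₀ * M.χ c₀ b = M.χ i b) := by
            intro b hbi
            by_cases hbl : IsLoop M b
            · exact Or.inl (chi_zero_right M hbl)
            by_cases hbp : b ∈ ParClass M c₀
            · exact Or.inl (chi_zero_of_par M hbp)
            right
            have hnr := hc₀min b (by simp [hbl, hbi])
            have hib : M.χ i b ≠ 0 := hiSchi b hbl hbi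
            have hbc₀ : M.χ b c₀ ≠ 0 :=
              chi_ne_of_not_par M hbl hc₀l (fun h => hbp (parclass_symm M h))
            have hm1 : M.χ i b * M.χ i c₀ * M.χ b c₀ = -1 :=
              sgn_notone _ _ _ hib hic₀ hbc₀ hnr
            have h2 : -(M.χ b c₀) = M.χ i b * M.χ i c₀ := sgn_neg_of _ _ _ hm1
            rw [M.alt c₀ b, h2]
            exact sgn_tau _ _ hic₀
          have hnz2 : ∃ a b, copySgn i (M.χ i c₀) a * copySgn i (M.χ i c₀) b *
              M.χ (copyFun i c₀ a) (copyFun i c₀ b) ≠ 0 := by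
            obtain ⟨a, b, ha, hb, hM⟩ := hnzoff
            refine ⟨a, b, ?_⟩
            rw [copySgn_other _ _ ha, copySgn_other _ _ hb, copyFun_other _ _ ha,
              copyFun_other _ _ hb, one_mul, one_mul]
            exact hM
          set N'' := reSign M (copyFun i c₀) (copySgn i (M.χ i c₀)) hnz2 with hN''def
          have h2v : ∀ a b, N''.χ a b = copySgn i (M.χ i c₀) a * copySgn i (M.χ i c₀) b *
              M.χ (copyFun i c₀ a) (copyFun i c₀ b) := by
            intro a b; rw [hN''def]; rfl
          have h2off : ∀ a b : Fin n, a ≠ i → b ≠ i → N''.χ a b = M.χ a b := by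
            intro a b ha hb
            rw [h2v, copySgn_other _ _ ha, copySgn_other _ _ hb, copyFun_other _ _ ha,
              copyFun_other _ _ hb, one_mul, one_mul]
          have h2ib : ∀ b : Fin n, b ≠ i → N''.χ i b = M.χ i c₀ * M.χ c₀ b := by
            intro b hb
            rw [h2v, copySgn_self, copySgn_other _ _ hb, copyFun_self, copyFun_other _ _ hb,
              mul_one]
          have hleN''M : omLe N'' M := by
            refine ⟨1, Or.inl rfl, fun a b => ?_⟩
            by_cases ha : a = i <;> by_cases hb : b = i
            · subst ha; subst hb
              refine Or.inl ?_
              rw [h2v, copyFun_self, chi_self, mul_zero]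
            · subst ha
              rcases KEY1 b hb with h0 | hkey
              · exact Or.inl (by rw [h2ib b hb, h0, mul_zero])
              · exact Or.inr (by rw [h2ib b hb, hkey, one_mul])
            · rcases KEY1 a ha with h0 | hkey
              · refine Or.inl ?_
                rw [hb, h2v, copySgn_other _ _ ha, copySgn_self, copyFun_other _ _ ha,
                  copyFun_self, M.alt a c₀, h0, neg_zero, mul_zero]
              · refine Or.inr ?_
                rw [hb, h2v, copySgn_other _ _ ha, copySgn_self, copyFun_other _ _ ha,
                  copyFun_self, M.alt a c₀, M.alt a i, one_mul, one_mul]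
                exact sgn_flip _ _ _ hkey
            · exact Or.inr (by rw [h2off a b ha hb, one_mul])
          have hnleMN'' : ¬ omLe M N'' := by
            rintro ⟨δ, hδ, hm⟩
            rcases hm i c₀ with h | h
            · exact hic₀ h
            · rw [h2ib c₀ hc₀i, chi_self, mul_zero, mul_zero] at h
              exact hic₀ h
          have hleNN'' : omLe N N'' := by
            refine ⟨ε, hε, fun a b => ?_⟩
            by_cases hab : a = i ∨ b = i
            · exact Or.inl (hNi a b hab)
            · push_neg at hab
              rcases hNM a b with h | h
              · exact Or.inl h
              · exact Or.inr (by rw [h, h2off a b hab.1 hab.2])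
          have hnleN''N : ¬ omLe N'' N := by
            have hbex : ∃ b : Fin n, ¬IsLoop M b ∧ b ≠ i ∧ b ∉ ParClass M c₀ := by
              by_cases hcp : c ∈ ParClass M c₀
              · refine ⟨d, hdl, hdi, fun hdp => ?_⟩
                apply hcd'
                rw [← parclass_eq M hdp] at hcp
                exact hcp
              · exact ⟨c, hcl, hci, hcp⟩
            obtain ⟨b, hbl, hbi, hbp⟩ := hbex
            rintro ⟨δ, hδ, hm⟩
            have hnz : N''.χ i b ≠ 0 := by
              rw [h2ib b hbi]
              exact mul_ne_zero hic₀ (chi_ne_of_not_par M hc₀l hbl hbp)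
            rcases hm i b with h | h
            · exact hnz h
            · rw [hNi i b (Or.inl rfl), mul_zero] at h; exact hnz h
          exact hcov N'' ⟨hleNN'', hnleN''N⟩ ⟨hleN''M, hnleMN''⟩
        · -- degenerate: N would be identically zero
          push_neg at hcd
          obtain ⟨x, y, hxy⟩ := N.nonzero
          apply hxy
          by_cases hx : x = i
          · exact hNi x y (Or.inl hx)
          by_cases hy : y = i
          · exact hNi x y (Or.inr hy)
          by_cases hxl : IsLoop M x
          · exact hNM' x y (hxl y)
          by_cases hyl : IsLoop M y
          · exact hNM' x y (chi_zero_right M hyl)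
          have hmem : x ∈ ParClass M y := hcd x y hxl hyl hx hy
          exact hNM' x y (chi_zero_of_par M (parclass_symm M hmem))
      left
      refine ⟨ε, hε, i, ⟨hiM, hpar, hiN, hagree⟩, ?_⟩
      rintro i' ⟨hi'M, ⟨j', hj'i', hj'P⟩, hi'N, hagr'⟩
      by_contra hne'
      have hrow : ∀ b : Fin n, b ≠ i → M.χ i' b = 0 := by
        intro b hb
        have h1 := hagree i' b hne' hb
        rw [hi'N b] at h1
        exact sgn_zero_of_eq ε _ hε0 h1
      have hii' : M.χ i' i ≠ 0 := by
        intro h0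
        apply hi'M; intro k
        by_cases hk : k = i
        · rw [hk]; exact h0
        · exact hrow k hk
      obtain ⟨η, hηpm, hη⟩ := parclass_sign M hj'P
      have hj'i : j' ≠ i := by
        intro hji'
        apply hiM; intro k
        by_cases hk : k = i
        · rw [hk]; exact chi_self M i
        · rw [← hji', hη k, hrow k hk, mul_zero]
      have hj'iM : M.χ j' i ≠ 0 := by
        rw [hη i]
        exact mul_ne_zero (sgn_eps_ne η hηpm) hii'
      have hagval : N.χ j' i = ε * M.χ j' i :=
        hagr' j' i hj'i' (fun hh => hne' hh.symm)
      rw [hNi j' i (Or.inr rfl)] at hagval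
      exact hj'iM (sgn_zero_of_eq ε _ hε0 hagval)
    · -- ===================== CASE 2 : CR2 =====================
      push_neg at hcase
      -- hcase : ∀ i, ¬IsLoop M i → ¬IsLoop N i
      have hW : ∃ a b : Fin n, N.χ a b = 0 ∧ M.χ a b ≠ 0 := by
        by_contra hc; push_neg at hc
        apply hnle
        refine ⟨ε, hε, fun a b => ?_⟩
        by_cases h0 : N.χ a b = 0
        · exact Or.inl (hc a b h0)
        · rcases hNM a b with h | h
          · exact absurd h h0
          · exact Or.inr (by rw [h, sgn_eps_cancel ε _ hε])
      obtain ⟨a, b, hab0, habM⟩ := hW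
      have haMl : ¬IsLoop M a := fun hl => habM (hl b)
      have hbMl : ¬IsLoop M b := fun hl => habM (chi_zero_right M hl)
      have haN : ¬IsLoop N a := hcase a haMl
      have hbN : ¬IsLoop N b := hcase b hbMl
      have hbPa : b ∈ ParClass N a := par_of_chi_zero N hab0 haN hbN
      -- "U" is the predicate (¬IsLoop M x ∧ x ∈ ParClass N a)
      have hUzero : ∀ x, x ∈ ParClass N a → ∀ y, y ∈ ParClass N a → N.χ x y = 0 := by
        intro x hx y hy
        refine chi_zero_of_par N ?_
        rw [parclass_eq N hx]; exact hy
      have hUclosed : ∀ u, ¬IsLoop M u → u ∈ ParClass N a →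
          ∀ v, ¬IsLoop M v → N.χ u v = 0 → v ∈ ParClass N a := by
        intro u hul hu v hvl h0
        have hv : v ∈ ParClass N u := par_of_chi_zero N h0 (hcase u hul) (hcase v hvl)
        rw [parclass_eq N hu] at hv
        exact hv
      have hUcross : ∀ u, ¬IsLoop M u → u ∈ ParClass N a →
          ∀ v, ¬IsLoop M v → v ∉ ParClass N a →
          N.χ u v ≠ 0 ∧ M.χ u v ≠ 0 ∧ N.χ u v = ε * M.χ u v := by
        intro u hul hu v hvl hv
        have hnz : N.χ u v ≠ 0 := fun h0 => hv (hUclosed u hul hu v hvl h0)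
        rcases hNM u v with h | h
        · exact absurd h hnz
        · exact ⟨hnz, fun hm => hnz (by rw [h, hm, mul_zero]), h⟩
      have he : ∃ e, ¬IsLoop M e ∧ e ∉ ParClass N a := by
        by_contra hc; push_neg at hc
        obtain ⟨x, y, hxy⟩ := N.nonzero
        apply hxy
        by_cases hxl : IsLoop M x
        · exact hNM' x y (hxl y)
        by_cases hyl : IsLoop M y
        · exact hNM' x y (chi_zero_right M hyl)
        exact hUzero x (hc x hxl) y (hc y hyl)
      obtain ⟨e, heMl, heU⟩ := he
      have heu : ∀ u, ¬IsLoop M u → u ∈ ParClass N a → M.χ e u ≠ 0 := by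
        intro u hul hu
        obtain ⟨-, hM, -⟩ := hUcross u hul hu e heMl heU
        intro h0; apply hM
        rw [M.alt u e, h0, neg_zero]
      -- the two minimal classes inside "U"
      obtain ⟨c₀, hc₀S, hc₀min⟩ := finset_exists_min
        (fun x y => M.χ e x * M.χ e y * M.χ x y = 1)
        (Finset.univ.filter (fun x => ¬IsLoop M x ∧ x ∈ ParClass N a))
        ⟨a, by simp [haMl, parclass_refl N a]⟩
        (fun x _ y _ z _ h1 h2 => trans_of_gp M e x y z h1 h2)
        (fun x _ h1 => by
          have h1' : M.χ e x * M.χ e x * M.χ x x = 1 := h1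
          rw [chi_self M x, mul_zero] at h1'
          exact absurd h1' (by decide))
      rw [Finset.mem_filter] at hc₀S
      obtain ⟨-, hc₀l, hc₀U⟩ := hc₀S
      have hSU'ne : ((Finset.univ.filter (fun x => ¬IsLoop M x ∧ x ∈ ParClass N a)).filter
          (fun x => x ∉ ParClass M c₀)).Nonempty := by
        by_cases hap : a ∈ ParClass M c₀
        · refine ⟨b, ?_⟩
          simp only [Finset.mem_filter, Finset.mem_univ, true_and]
          refine ⟨⟨hbMl, hbPa⟩, fun hbp => ?_⟩
          apply habM
          apply chi_zero_of_par M
          rw [parclass_eq M hap]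
          exact hbp
        · refine ⟨a, ?_⟩
          simp only [Finset.mem_filter, Finset.mem_univ, true_and]
          exact ⟨⟨haMl, parclass_refl N a⟩, hap⟩
      obtain ⟨c₁, hc₁S, hc₁min⟩ := finset_exists_min
        (fun x y => M.χ e x * M.χ e y * M.χ x y = 1)
        ((Finset.univ.filter (fun x => ¬IsLoop M x ∧ x ∈ ParClass N a)).filter
          (fun x => x ∉ ParClass M c₀))
        hSU'ne
        (fun x _ y _ z _ h1 h2 => trans_of_gp M e x y z h1 h2)
        (fun x _ h1 => by
          have h1' : M.χ e x * M.χ e x * M.χ x x = 1 := h1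
          rw [chi_self M x, mul_zero] at h1'
          exact absurd h1' (by decide))
      rw [Finset.mem_filter, Finset.mem_filter] at hc₁S
      obtain ⟨⟨-, hc₁l, hc₁U⟩, hc₁p⟩ := hc₁S
      have hec₀ : M.χ e c₀ ≠ 0 := heu c₀ hc₀l hc₀U
      have hec₁ : M.χ e c₁ ≠ 0 := heu c₁ hc₁l hc₁U
      have hc₀e : M.χ c₀ e ≠ 0 := by
        intro h0; apply hec₀; rw [M.alt e c₀, h0, neg_zero]
      have hc₁e : M.χ c₁ e ≠ 0 := by
        intro h0; apply hec₁; rw [M.alt e c₁, h0, neg_zero]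
      have hc₀c₁ : M.χ c₀ c₁ ≠ 0 := chi_ne_of_not_par M hc₀l hc₁l hc₁p
      have hc₀c₁' : c₀ ∉ ParClass M c₁ := fun hh => hc₁p (parclass_symm M hh)
      have hs0 : M.χ e c₀ * M.χ e c₁ ≠ 0 := mul_ne_zero hec₀ hec₁
      -- classes of c₀,c₁ sit inside "U"
      have hPc₀U : ∀ x, x ∈ ParClass M c₀ → (¬IsLoop M x ∧ x ∈ ParClass N a) := by
        intro x hx
        have hxl : ¬IsLoop M x := parclass_nonloop M hc₀l hx
        exact ⟨hxl, hUclosed c₀ hc₀l hc₀U x hxl (hNM' c₀ x (chi_zero_of_par M hx))⟩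
      have hPc₁U : ∀ x, x ∈ ParClass M c₁ → (¬IsLoop M x ∧ x ∈ ParClass N a) := by
        intro x hx
        have hxl : ¬IsLoop M x := parclass_nonloop M hc₁l hx
        exact ⟨hxl, hUclosed c₁ hc₁l hc₁U x hxl (hNM' c₁ x (chi_zero_of_par M hx))⟩
      -- minimality consequences
      have hminval₀ : ∀ v, ¬IsLoop M v → v ∈ ParClass N a → v ∉ ParClass M c₀ →
          M.χ c₀ v = M.χ e v * M.χ e c₀ := by
        intro v hvl hvU hvp
        have hnr := hc₀min v (by
          simp only [Finset.mem_filter, Finset.mem_univ, true_and]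
          exact ⟨hvl, hvU⟩)
        have hvc₀ : M.χ v c₀ ≠ 0 :=
          chi_ne_of_not_par M hvl hc₀l (fun hh => hvp (parclass_symm M hh))
        have h1 : M.χ e v * M.χ e c₀ * M.χ v c₀ = -1 :=
          sgn_notone _ _ _ (heu v hvl hvU) hec₀ hvc₀ hnr
        rw [M.alt c₀ v]
        exact sgn_neg_of _ _ _ h1
      have hminval₁ : ∀ v, ¬IsLoop M v → v ∈ ParClass N a → v ∉ ParClass M c₀ →
          v ∉ ParClass M c₁ → M.χ c₁ v = M.χ e v * M.χ e c₁ := by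
        intro v hvl hvU hvp0 hvp1
        have hnr := hc₁min v (by
          simp only [Finset.mem_filter, Finset.mem_univ, true_and]
          exact ⟨⟨hvl, hvU⟩, hvp0⟩)
        have hvc₁ : M.χ v c₁ ≠ 0 :=
          chi_ne_of_not_par M hvl hc₁l (fun hh => hvp1 (parclass_symm M hh))
        have h1 : M.χ e v * M.χ e c₁ * M.χ v c₁ = -1 :=
          sgn_notone _ _ _ (heu v hvl hvU) hec₁ hvc₁ hnr
        rw [M.alt c₁ v]
        exact sgn_neg_of _ _ _ h1
      -- KEY2
      have KEY2 : ∀ v, v ∉ ParClass M c₁ →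
          (M.χ c₀ v = 0 ∨ (M.χ e c₀ * M.χ e c₁) * M.χ c₀ v = M.χ c₁ v) := by
        intro v hvp1
        by_cases hvl : IsLoop M v
        · exact Or.inl (chi_zero_right M hvl)
        by_cases hvp0 : v ∈ ParClass M c₀
        · exact Or.inl (chi_zero_of_par M hvp0)
        right
        by_cases hvU : v ∈ ParClass N a
        · rw [hminval₀ v hvl hvU hvp0, hminval₁ v hvl hvU hvp0 hvp1]
          exact sgn_calc1 _ _ _ hec₀
        · -- v outside "U": use that c₀, c₁ are N-parallel to a
          obtain ⟨η₀, hη₀pm, hη₀⟩ := parclass_sign N hc₀U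
          obtain ⟨η₁, hη₁pm, hη₁⟩ := parclass_sign N hc₁U
          obtain ⟨hnz0, hM0, heq0⟩ := hUcross c₀ hc₀l hc₀U v hvl hvU
          obtain ⟨hnz1, hM1, heq1⟩ := hUcross c₁ hc₁l hc₁U v hvl hvU
          obtain ⟨hnze0, hMe0, heqe0⟩ := hUcross c₀ hc₀l hc₀U e heMl heU
          obtain ⟨hnze1, hMe1, heqe1⟩ := hUcross c₁ hc₁l hc₁U e heMl heU
          have f0 : M.χ c₀ v = ε * (η₀ * N.χ a v) := by
            rw [← hη₀ v, heq0]
            exact (sgn_eps_cancel ε _ hε).symm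
          have f1 : M.χ c₁ v = ε * (η₁ * N.χ a v) := by
            rw [← hη₁ v, heq1]
            exact (sgn_eps_cancel ε _ hε).symm
          have fe0 : M.χ c₀ e = ε * (η₀ * N.χ a e) := by
            rw [← hη₀ e, heqe0]
            exact (sgn_eps_cancel ε _ hε).symm
          have fe1 : M.χ c₁ e = ε * (η₁ * N.χ a e) := by
            rw [← hη₁ e, heqe1]
            exact (sgn_eps_cancel ε _ hε).symm
          have hr : N.χ a e ≠ 0 := by
            intro h0; apply hnze0; rw [hη₀ e, h0, mul_zero]
          rw [M.alt e c₀, M.alt e c₁, fe0, fe1, f0, f1]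
          exact sgn_calc2' _ _ _ _ _ hε0 (sgn_eps_ne η₀ hη₀pm) hr
      -- τ
      have htau : ∀ x, x ∈ ParClass M c₁ → ∀ k,
          M.χ x k = (M.χ c₁ e * M.χ x e) * M.χ c₁ k := by
        intro x hx k
        obtain ⟨η, hηpm, hη⟩ := parclass_sign M hx
        rw [hη k, hη e, sgn_tau _ _ hc₁e]
      have hPc₁e : ∀ x, x ∈ ParClass M c₁ → M.χ x e ≠ 0 := by
        intro x hx
        obtain ⟨η, hηpm, hη⟩ := parclass_sign M hx
        rw [hη e]
        exact mul_ne_zero (sgn_eps_ne η hηpm) hc₁e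
      have heP : e ∉ ParClass M c₁ := by
        intro hh
        apply hec₁
        rw [M.alt e c₁, chi_zero_of_par M hh, neg_zero]
      -- N₃ : merge the classes of c₀ and c₁
      have hnz3 : ∃ p q, mergeSgn M c₁ e (M.χ e c₀ * M.χ e c₁) p *
          mergeSgn M c₁ e (M.χ e c₀ * M.χ e c₁) q *
          M.χ (mergeFun M c₁ c₀ p) (mergeFun M c₁ c₀ q) ≠ 0 := by
        refine ⟨e, c₀, ?_⟩
        rw [mergeSgn_notmem heP, mergeSgn_notmem hc₀c₁', mergeFun_notmem heP,
          mergeFun_notmem hc₀c₁', one_mul, one_mul]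
        exact hec₀
      set N₃ := reSign M (mergeFun M c₁ c₀) (mergeSgn M c₁ e (M.χ e c₀ * M.χ e c₁)) hnz3
        with hN₃def
      have h3v : ∀ p q, N₃.χ p q = mergeSgn M c₁ e (M.χ e c₀ * M.χ e c₁) p *
          mergeSgn M c₁ e (M.χ e c₀ * M.χ e c₁) q *
          M.χ (mergeFun M c₁ c₀ p) (mergeFun M c₁ c₀ q) := by
        intro p q; rw [hN₃def]; rfl
      have h3off : ∀ p q, p ∉ ParClass M c₁ → q ∉ ParClass M c₁ → N₃.χ p q = M.χ p q := by
        intro p q hp hq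
        rw [h3v, mergeSgn_notmem hp, mergeSgn_notmem hq, mergeFun_notmem hp,
          mergeFun_notmem hq, one_mul, one_mul]
      have h3both : ∀ p q, p ∈ ParClass M c₁ → q ∈ ParClass M c₁ → N₃.χ p q = 0 := by
        intro p q hp hq
        rw [h3v, mergeFun_mem hp, mergeFun_mem hq, chi_self, mul_zero]
      have h3mem : ∀ p q, p ∈ ParClass M c₁ → q ∉ ParClass M c₁ →
          N₃.χ p q = ((M.χ c₁ e * M.χ p e) * (M.χ e c₀ * M.χ e c₁)) * M.χ c₀ q := by
        intro p q hp hq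
        rw [h3v, mergeSgn_mem hp, mergeSgn_notmem hq, mergeFun_mem hp,
          mergeFun_notmem hq, mul_one]
      have h3mem' : ∀ p q, p ∉ ParClass M c₁ → q ∈ ParClass M c₁ →
          N₃.χ p q = ((M.χ c₁ e * M.χ q e) * (M.χ e c₀ * M.χ e c₁)) * M.χ p c₀ := by
        intro p q hp hq
        rw [h3v, mergeSgn_notmem hp, mergeSgn_mem hq, mergeFun_notmem hp,
          mergeFun_mem hq, one_mul]
      have hleN₃M : omLe N₃ M := by
        refine ⟨1, Or.inl rfl, fun p q => ?_⟩
        by_cases hp : p ∈ ParClass M c₁ <;> by_cases hq : q ∈ ParClass M c₁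
        · exact Or.inl (h3both p q hp hq)
        · rcases KEY2 q hq with h0 | hkey
          · exact Or.inl (by rw [h3mem p q hp hq, h0, mul_zero])
          · refine Or.inr ?_
            rw [h3mem p q hp hq, one_mul, mul_assoc, hkey]
            exact (htau p hp q).symm
        · rcases KEY2 p hp with h0 | hkey
          · refine Or.inl ?_
            rw [h3mem' p q hp hq, M.alt p c₀, h0, neg_zero, mul_zero]
          · refine Or.inr ?_
            rw [h3mem' p q hp hq, one_mul, M.alt p c₀, M.alt p q, htau q hq p,
              mul_assoc, mul_neg, hkey, mul_neg]
        · exact Or.inr (by rw [h3off p q hp hq, one_mul])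
      have hnleMN₃ : ¬ omLe M N₃ := by
        rintro ⟨δ, hδ, hm⟩
        rcases hm c₀ c₁ with h | h
        · exact hc₀c₁ h
        · rw [h3mem' c₀ c₁ hc₀c₁' (parclass_refl M c₁), chi_self, mul_zero, mul_zero] at h
          exact hc₀c₁ h
      have hleNN₃ : omLe N N₃ := by
        refine ⟨ε, hε, fun p q => ?_⟩
        by_cases h0 : N.χ p q = 0
        · exact Or.inl h0
        rcases hNM p q with h | h
        · exact absurd h h0
        refine Or.inr ?_
        have hMnz : M.χ p q ≠ 0 := fun hm => h0 (by rw [h, hm, mul_zero])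
        have hpl : ¬IsLoop M p := fun hl => hMnz (hl q)
        have hql : ¬IsLoop M q := fun hl => hMnz (chi_zero_right M hl)
        by_cases hp : p ∈ ParClass M c₁ <;> by_cases hq : q ∈ ParClass M c₁
        · exact absurd (hUzero p (hPc₁U p hp).2 q (hPc₁U q hq).2) h0
        · -- p ∈ class c₁, q outside
          have hqU : q ∉ ParClass N a :=
            fun hqU => h0 (hUzero p (hPc₁U p hp).2 q hqU)
          have hqp0 : q ∉ ParClass M c₀ :=
            fun hh => hqU (hPc₀U q hh).2
          rcases KEY2 q hq with hz | hkey
          · exact absurd (par_of_chi_zero M hz hc₀l hql) hqp0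
          · have hval : N₃.χ p q = M.χ p q := by
              rw [h3mem p q hp hq, mul_assoc, hkey]
              exact (htau p hp q).symm
            rw [h, hval]
        · have hpU : p ∉ ParClass N a :=
            fun hpU => h0 (hUzero p hpU q (hPc₁U q hq).2)
          have hpp0 : p ∉ ParClass M c₀ :=
            fun hh => hpU (hPc₀U p hh).2
          rcases KEY2 p hp with hz | hkey
          · exact absurd (par_of_chi_zero M hz hc₀l hpl) hpp0
          · have hval : N₃.χ p q = M.χ p q := by
              rw [h3mem' p q hp hq, M.alt p c₀, mul_assoc, mul_neg, hkey, mul_neg,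
                ← htau q hq p, ← M.alt p q]
            rw [h, hval]
        · rw [h, h3off p q hp hq]
      have h3N : omLe N₃ N := by
        by_contra hc
        exact hcov N₃ ⟨hleNN₃, hc⟩ ⟨hleN₃M, hnleMN₃⟩
      obtain ⟨δ, hδ, h3⟩ := h3N
      have hWsub : ∀ x y : Fin n, N.χ x y = 0 → M.χ x y ≠ 0 →
          x ∈ ParClass M c₀ ∪ ParClass M c₁ ∧ y ∈ ParClass M c₀ ∪ ParClass M c₁ := by
        intro x y h0 hM
        have hxl : ¬IsLoop M x := fun hl => hM (hl y)
        have hyl : ¬IsLoop M y := fun hl => hM (chi_zero_right M hl)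
        have h30 : N₃.χ x y = 0 := by
          rcases h3 x y with hh | hh
          · exact hh
          · rw [hh, h0, mul_zero]
        by_cases hx : x ∈ ParClass M c₁ <;> by_cases hy : y ∈ ParClass M c₁
        · exact ⟨Or.inr hx, Or.inr hy⟩
        · refine ⟨Or.inr hx, Or.inl ?_⟩
          rw [h3mem x y hx hy] at h30
          have hτs : (M.χ c₁ e * M.χ x e) * (M.χ e c₀ * M.χ e c₁) ≠ 0 :=
            mul_ne_zero (mul_ne_zero hc₁e (hPc₁e x hx)) hs0
          have hc₀y : M.χ c₀ y = 0 := sgn_factor _ _ hτs h30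
          exact par_of_chi_zero M hc₀y hc₀l hyl
        · refine ⟨Or.inl ?_, Or.inr hy⟩
          rw [h3mem' x y hx hy] at h30
          have hτs : (M.χ c₁ e * M.χ y e) * (M.χ e c₀ * M.χ e c₁) ≠ 0 :=
            mul_ne_zero (mul_ne_zero hc₁e (hPc₁e y hy)) hs0
          have hxc₀ : M.χ x c₀ = 0 := sgn_factor _ _ hτs h30
          have hc₀x : M.χ c₀ x = 0 := by rw [M.alt c₀ x, hxc₀, neg_zero]
          exact par_of_chi_zero M hc₀x hc₀l hxl
        · rw [h3off x y hx hy] at h30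
          exact absurd h30 hM
      obtain ⟨haP, hbP⟩ := hWsub a b hab0 habM
      have habpar : b ∉ ParClass M a := fun hh => habM (chi_zero_of_par M hh)
      have hclasses : ParClass M a ∪ ParClass M b = ParClass M c₀ ∪ ParClass M c₁ := by
        rcases haP with ha0 | ha1 <;> rcases hbP with hb0 | hb1
        · exfalso; apply habpar
          rw [parclass_eq M ha0]
          exact hb0
        · rw [parclass_eq M ha0, parclass_eq M hb1]
        · rw [parclass_eq M ha1, parclass_eq M hb0, Set.union_comm]
        · exfalso; apply habpar
          rw [parclass_eq M ha1]
          exact hb1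
      right
      refine ⟨ε, hε, a, b, haMl, hbMl, ?_, ?_, ?_⟩
      · intro hEq
        apply habpar
        rw [hEq]
        exact parclass_refl M b
      · intro x y hx hy
        have hxU : x ∈ ParClass N a := by
          rcases hx with hx | hx
          · exact hUclosed a haMl (parclass_refl N a) x (parclass_nonloop M haMl hx)
              (hNM' a x (chi_zero_of_par M hx))
          · exact hUclosed b hbMl hbPa x (parclass_nonloop M hbMl hx)
              (hNM' b x (chi_zero_of_par M hx))
        have hyU : y ∈ ParClass N a := by
          rcases hy with hy | hy
          · exact hUclosed a haMl (parclass_refl N a) y (parclass_nonloop M haMl hy)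
              (hNM' a y (chi_zero_of_par M hy))
          · exact hUclosed b hbMl hbPa y (parclass_nonloop M hbMl hy)
              (hNM' b y (chi_zero_of_par M hy))
        exact hUzero x hxU y hyU
      · intro x y hxy
        by_cases h0 : N.χ x y = 0
        · by_cases hM0 : M.χ x y = 0
          · rw [h0, hM0, mul_zero]
          · exfalso
            obtain ⟨hx', hy'⟩ := hWsub x y h0 hM0
            apply hxy
            rw [hclasses]
            exact ⟨hx', hy'⟩
        · rcases hNM x y with h | h
          · exact absurd h h0
          · exact h

  rcases hmain with h1 | h2
  · exact Or.inl ⟨h1, fun h2 => not_CR1_and_CR2 N M ⟨h1, h2⟩⟩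
  · exact Or.inr ⟨h2, fun h1 => not_CR1_and_CR2 N M ⟨h1, h2⟩⟩
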